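/- arXiv:1510.08798 — 4 statements merged into one kernel-verified Lean document; each statement's English description precedes it below -/
import Mathlib

section
/- Let (ω, J) be a compatible pair on a vector space V and let (θ, K) be an infinitesimal variation of (ω, J), meaning JK + KJ = 0 and ω(Kx, Jy) + ω(Jx, Ky) = θ(x,y) - θ(Jx,Jy) for all x, y. Then the bilinear form B̃(x,y) := ω(Kx,Jy) - Ã(x,y), where Ã(x,y) = (1/2)(θ(x,y) - θ(Jx,Jy)), is symmetric and anti-J-invariant (B̃(Jx,Jy) = -B̃(x,y)). -/
/- STATEMENT 6: For a compatible pair (ω, J) and an infinitesimal variation (θ, K)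
(i.e. JK + KJ = 0 and ω(Kx,Jy) + ω(Jx,Ky) = θ(x,y) - θ(Jx,Jy)), the bilinear form
B̃(x,y) = ω(Kx,Jy) - Ã(x,y), with Ã(x,y) = (1/2)(θ(x,y) - θ(Jx,Jy)), is symmetric and
anti-J-invariant. -/

theorem stmt6
    {V : Type*} [AddCommGroup V] [Module ℝ V] [FiniteDimensional ℝ V]
    (J : V →ₗ[ℝ] V) (hJ : ∀ x, J (J x) = -x)
    (ω : V →ₗ[ℝ] V →ₗ[ℝ] ℝ)
    (hanti : ∀ x y, ω x y = -ω y x)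
    (hcompat : ∀ x y, ω (J x) (J y) = ω x y)
    (htame : ∀ x : V, x ≠ 0 → 0 < ω x (J x))
    (θ : V →ₗ[ℝ] V →ₗ[ℝ] ℝ)
    (hθanti : ∀ x y, θ x y = -θ y x)
    (K : V →ₗ[ℝ] V)
    (hJK : ∀ x, J (K x) + K (J x) = 0)
    (hvar : ∀ x y, ω (K x) (J y) + ω (J x) (K y) = θ x y - θ (J x) (J y))
    (A B : V → V → ℝ)
    (hA : ∀ x y, A x y = (θ x y - θ (J x) (J y)) / 2)
    (hB : ∀ x y, B x y = ω (K x) (J y) - A x y) :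
    (∀ x y, B x y = B y x) ∧ (∀ x y, B (J x) (J y) = -B x y) := by
  have hKJ : ∀ x, K (J x) = -J (K x) := fun x =>
    eq_neg_of_add_eq_zero_right (hJK x)
  have hB2 : ∀ x y, B x y = (ω (K x) (J y) - ω (J x) (K y)) / 2 := by
    intro x y
    have h := hvar x y
    rw [hB, hA]
    linarith
  constructor
  · intro x y
    rw [hB2, hB2]
    have h1 := hanti (J x) (K y)
    have h2 := hanti (J y) (K x)
    linarith
  · intro x y
    rw [hB2, hB2]
    have h3 : ω (J (K x)) y = -ω (K x) (J y) := by
      have h := hcompat (J (K x)) y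
      rw [hJ (K x)] at h
      simpa using h.symm
    have h4 : ω (J (K y)) x = -ω (K y) (J x) := by
      have h := hcompat (J (K y)) x
      rw [hJ (K y)] at h
      simpa using h.symm
    have h5 := hanti (J x) (K y)
    have h6 := hanti x (J (K y))
    rw [hKJ x, hJ y, hJ x, hKJ y]
    simp only [map_neg, LinearMap.neg_apply]
    linarith
end

section
/- Conversely, let (ω, J) be a compatible pair, θ an antisymmetric bilinear form, Ã(x,y) = (1/2)(θ(x,y) - θ(Jx,Jy)), and B̃ any symmetric anti-J-invariant bilinear form. Define K: V → V by g(Kx,y) = Ã(x,y) + B̃(x,y) where g(x,y) = ω(x,Jy). Then (θ, K) satisfies JK + KJ = 0 and ω(Kx,Jy) + ω(Jx,Ky) = θ(x,y) - θ(Jx,Jy). -/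
/- STATEMENT 7: Conversely, for a compatible pair (ω, J), an antisymmetric bilinear form
θ with Ã(x,y) = (1/2)(θ(x,y)-θ(Jx,Jy)), and any symmetric anti-J-invariant bilinear form
B̃, the map K defined by g(Kx,y) = Ã(x,y) + B̃(x,y) (with g(x,y) = ω(x,Jy)) satisfies
JK + KJ = 0 and ω(Kx,Jy) + ω(Jx,Ky) = θ(x,y) - θ(Jx,Jy). -/

theorem stmt7
    {V : Type*} [AddCommGroup V] [Module ℝ V] [FiniteDimensional ℝ V]
    (J : V →ₗ[ℝ] V) (hJ : ∀ x, J (J x) = -x)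
    (ω : V →ₗ[ℝ] V →ₗ[ℝ] ℝ)
    (hanti : ∀ x y, ω x y = -ω y x)
    (hcompat : ∀ x y, ω (J x) (J y) = ω x y)
    (htame : ∀ x : V, x ≠ 0 → 0 < ω x (J x))
    (θ : V →ₗ[ℝ] V →ₗ[ℝ] ℝ)
    (hθanti : ∀ x y, θ x y = -θ y x)
    (A : V → V → ℝ)
    (hA : ∀ x y, A x y = (θ x y - θ (J x) (J y)) / 2)
    (B : V →ₗ[ℝ] V →ₗ[ℝ] ℝ)
    (hBsymm : ∀ x y, B x y = B y x)
    (hBanti : ∀ x y, B (J x) (J y) = -B x y)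
    (K : V →ₗ[ℝ] V)
    -- g(Kx, y) = ω(Kx, Jy) = Ã(x,y) + B̃(x,y)
    (hK : ∀ x y, ω (K x) (J y) = A x y + B x y) :
    (∀ x, J (K x) + K (J x) = 0) ∧
    (∀ x y, ω (K x) (J y) + ω (J x) (K y) = θ x y - θ (J x) (J y)) := by
  have hnd : ∀ v : V, (∀ z, ω v z = 0) → v = 0 := by
    intro v hv
    by_contra h
    have := htame v h
    rw [hv (J v)] at this
    exact lt_irrefl 0 this
  constructor
  · intro x
    apply hnd
    intro z
    have hz : z = -J (J z) := by rw [hJ, neg_neg]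
    rw [hz]
    have h1 : ω (J (K x)) (J (J z)) = ω (K x) (J z) := hcompat _ _
    have h2 : ω (K x) (J z) = A x z + B x z := hK x z
    have h3 : ω (K (J x)) (J (J z)) = A (J x) (J z) + B (J x) (J z) := hK (J x) (J z)
    have hAeq : A (J x) (J z) = -A x z := by
      rw [hA, hA, hJ, hJ]
      simp only [map_neg, LinearMap.neg_apply]
      ring
    have hBeq : B (J x) (J z) = -B x z := hBanti x z
    simp only [map_add, map_neg, LinearMap.add_apply, LinearMap.neg_apply]
    rw [h1, h2, h3, hAeq, hBeq]
    ring
  · intro x y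
    have h1 : ω (K x) (J y) = A x y + B x y := hK x y
    have h2 : ω (J x) (K y) = -(A y x + B y x) := by
      rw [hanti]
      rw [hK y x]
    rw [h1, h2, hA, hA, hBsymm, hθanti x y, hθanti (J x) (J y)]
    ring
end

section
/- On the flat torus T⁴ = ℝ⁴/ℤ⁴ with coordinates (x,y,z,w), standard complex structure J₀, and Hermitian form ω = dx∧dy + b(x,y) dz∧dw with b > 0, one has -d*dω = (Δb - b^{-1}|∇b|²) dz∧dw, where Δ and ∇ are taken with respect to the flat metric in the (x,y) variables. -/
/- STATEMENT 13: On T⁴ = ℝ⁴/ℤ⁴ with coordinates (x,y,z,w), standard J₀, and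
ω = dx∧dy + b(x,y) dz∧dw with b > 0, one has
  -d*dω = (Δb - b⁻¹|∇b|²) dz∧dw,
with Δ, ∇ taken in the (x,y) variables.  Forms in the relevant class are recorded by
their coefficient functions on T² (functions of (x,y), ℤ²-periodic); the operators d and
the Hodge star of the metric with orthonormal coframe dx, dy, √b dz, √b dw are given by
their explicit formulas, and d* = -*d*. -/

noncomputable section

/-- ∂/∂x of a function of (x,y). -/
def pX (f : ℝ → ℝ → ℝ) (x y : ℝ) : ℝ := deriv (fun x' => f x' y) x

/-- ∂/∂y of a function of (x,y). -/
def pY (f : ℝ → ℝ → ℝ) (x y : ℝ) : ℝ := deriv (fun y' => f x y') y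

/-- dω = (∂_x b) dx∧dz∧dw + (∂_y b) dy∧dz∧dw, recorded by its two coefficients. -/
def dOmega (b : ℝ → ℝ → ℝ) : (ℝ → ℝ → ℝ) × (ℝ → ℝ → ℝ) := (pX b, pY b)

/-- Hodge star (for the metric of (ω, J₀)) of a 3-form
r dx∧dz∧dw + s dy∧dz∧dw, namely the 1-form -(s/b) dx + (r/b) dy,
recorded by its coefficients (u, v) along dx, dy. -/
def star3 (b : ℝ → ℝ → ℝ) (rs : (ℝ → ℝ → ℝ) × (ℝ → ℝ → ℝ)) :
    (ℝ → ℝ → ℝ) × (ℝ → ℝ → ℝ) :=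
  (fun x y => -(rs.2 x y) / b x y, fun x y => rs.1 x y / b x y)

/-- d of the 1-form u dx + v dy (u, v functions of (x,y)):
the 2-form (∂_x v - ∂_y u) dx∧dy, recorded by its dx∧dy coefficient. -/
def dOne (uv : (ℝ → ℝ → ℝ) × (ℝ → ℝ → ℝ)) : ℝ → ℝ → ℝ :=
  fun x y => pX uv.2 x y - pY uv.1 x y

/-- Hodge star of c dx∧dy, namely (c·b) dz∧dw, recorded by its dz∧dw coefficient. -/
def star2 (b : ℝ → ℝ → ℝ) (c : ℝ → ℝ → ℝ) : ℝ → ℝ → ℝ :=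
  fun x y => c x y * b x y

/-- d*dω = -*d*(dω): its dz∧dw coefficient (the dx∧dy coefficient vanishes). -/
def dStarDOmega (b : ℝ → ℝ → ℝ) : ℝ → ℝ → ℝ :=
  fun x y => -(star2 b (dOne (star3 b (dOmega b))) x y)


lemma key_aux (f : ℝ → ℝ) (hf : ContDiff ℝ (⊤ : ℕ∞) f) (hp : ∀ t, 0 < f t) (x : ℝ) :
    deriv (fun t => deriv f t / f t) x * f x =
      deriv (deriv f) x - (deriv f x) ^ 2 / f x := by
  have h1 : Differentiable ℝ f := hf.differentiable (by simp)
  have hf' : ContDiff ℝ (⊤ : ℕ∞) f := hf.of_le (by simp)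
  have h2 : ContDiff ℝ (⊤ : ℕ∞) (deriv f) := (contDiff_infty_iff_deriv.mp hf').2
  have h3 : Differentiable ℝ (deriv f) := h2.differentiable (by simp)
  have hne : f x ≠ 0 := (hp x).ne'
  rw [deriv_fun_div (h3 x) (h1 x) hne]
  field_simp

theorem stmt13 (b : ℝ → ℝ → ℝ)
    (hpos : ∀ x y, 0 < b x y)
    (hsm : ContDiff ℝ (⊤ : ℕ∞) (Function.uncurry b))
    (hperx : ∀ x y, b (x + 1) y = b x y)
    (hpery : ∀ x y, b x (y + 1) = b x y) :
    ∀ x y, -(dStarDOmega b x y) =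
      (pX (pX b) x y + pY (pY b) x y)
        - (pX b x y ^ 2 + pY b x y ^ 2) / b x y := by
  intro x y
  set f : ℝ → ℝ := fun t => b t y
  set g : ℝ → ℝ := fun t => b x t
  have hf : ContDiff ℝ (⊤ : ℕ∞) f := hsm.comp (contDiff_id.prodMk contDiff_const)
  have hg : ContDiff ℝ (⊤ : ℕ∞) g := hsm.comp (contDiff_const.prodMk contDiff_id)
  have hpf : ∀ t, 0 < f t := fun t => hpos t y
  have hpg : ∀ t, 0 < g t := fun t => hpos x t
  have keyf := key_aux f hf hpf x
  have keyg := key_aux g hg hpg y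
  simp only [dStarDOmega, star2, dOne, star3, dOmega, pX, pY, neg_neg]
  have e1 : (fun x' => deriv (fun x'' => b x'' y) x' / b x' y)
      = fun t => deriv f t / f t := rfl
  have e2 : (fun y' => -deriv (fun y'' => b x y'') y' / b x y')
      = fun t => -(deriv g t / g t) := by
    funext t; rw [neg_div]
  rw [e1, e2, deriv.fun_neg]
  have hgpos : g y ≠ 0 := (hpg y).ne'
  have : (deriv (fun t => deriv f t / f t) x - -deriv (fun t => deriv g t / g t) y) * b x y
      = deriv (fun t => deriv f t / f t) x * f x + deriv (fun t => deriv g t / g t) y * g y := by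
    show _ = _ * f x + _ * g y
    have : b x y = f x := rfl
    rw [this]; ring
  rw [this, keyf, keyg]
  show deriv (deriv f) x - deriv f x ^ 2 / g y + (deriv (deriv g) y - deriv g y ^ 2 / g y)
      = deriv (deriv f) x + deriv (deriv g) y - (deriv f x ^ 2 + deriv g y ^ 2) / g y
  field_simp
  ring

end
end

section
/- Conversely, let (M, ω, J) be a compact almost Hermitian 6-manifold such that dω = Re(Ω) for some (3,0)-form Ω (with *Ω = -√(-1)Ω) and d*dω = λω with λ > 0. Write Ω = 3μ Ω̃ with |Ω̃| = 1 and μ > 0. Then λ = 12μ², and the pair satisfies the nearly Kähler structure equations dω = 3μ Re(Ω̃) and d(Im Ω̃) = -2μ ω². -/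
/- STATEMENT 17: Converse: on a compact almost Hermitian 6-manifold (M, ω, J) with
dω = Re(Ω) for a (3,0)-form Ω (so *Re(Ω̃) = Im(Ω̃)), d*dω = λω with λ > 0, and
Ω = 3μ Ω̃ with |Ω̃| = 1 and μ > 0, one gets λ = 12μ² and the nearly Kähler structure
equations dω = 3μ Re(Ω̃), d(Im Ω̃) = -2μ ω².  Abstract setup: Rt = Re(Ω̃), It = Im(Ω̃);
d* = -*d*; *ω = ω²/2 and ** = id on 4-forms; the L² pairings ip2, ip3 satisfy the
adjointness (d*α, ω) = (α, dω), and the pointwise norms |ω|² = 3, |Re Ω̃|² = 4 give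
(ω,ω) = 3·Vol(M), (Rt,Rt) = 4·Vol(M). -/

theorem stmt17
    {Ω2 Ω3 Ω4 : Type*}
    [AddCommGroup Ω2] [Module ℝ Ω2]
    [AddCommGroup Ω3] [Module ℝ Ω3]
    [AddCommGroup Ω4] [Module ℝ Ω4]
    (d2 : Ω2 →ₗ[ℝ] Ω3) (d3 : Ω3 →ₗ[ℝ] Ω4)
    (star3 : Ω3 →ₗ[ℝ] Ω3) (star4 : Ω4 →ₗ[ℝ] Ω2) (star2 : Ω2 →ₗ[ℝ] Ω4)
    (ip2 : Ω2 →ₗ[ℝ] Ω2 →ₗ[ℝ] ℝ) (ip3 : Ω3 →ₗ[ℝ] Ω3 →ₗ[ℝ] ℝ)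
    (ω : Ω2) (ωsq : Ω4) (Rt It : Ω3)
    (μ lam volM : ℝ)
    (hμ : 0 < μ) (hlam : 0 < lam) (hvol : 0 < volM)
    -- dω = Re(Ω) = 3μ Re(Ω̃)
    (hd : d2 ω = (3 * μ) • Rt)
    -- *Re(Ω̃) = Im(Ω̃)
    (hstarRt : star3 Rt = It)
    -- d*dω = λω, where d* = -*d*
    (hflow : -(star4 (d3 (star3 (d2 ω)))) = lam • ω)
    -- *ω = ω²/2 and ** = id on 4-forms
    (hstar2 : star2 ω = (1 / 2 : ℝ) • ωsq)
    (hss : ∀ η : Ω4, star2 (star4 η) = η)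
    -- L² adjointness (d*α, ω) = (α, dω)
    (hadj : ∀ α : Ω3, ip2 (-(star4 (d3 (star3 α)))) ω = ip3 α (d2 ω))
    -- pointwise norms |ω|² = 3, |Re Ω̃|² = 4 integrated over M
    (hnω : ip2 ω ω = 3 * volM)
    (hnRt : ip3 Rt Rt = 4 * volM) :
    lam = 12 * μ ^ 2 ∧
    d2 ω = (3 * μ) • Rt ∧
    d3 It = (-(2 * μ)) • ωsq := by
  -- λ determination
  have h1 : ip2 (-(star4 (d3 (star3 (d2 ω))))) ω = ip3 (d2 ω) (d2 ω) := hadj (d2 ω)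
  rw [hflow, hd] at h1
  simp only [map_smul, LinearMap.smul_apply, smul_eq_mul, hnω, hnRt] at h1
  have hlameq : lam = 12 * μ ^ 2 := by
    have hv : volM ≠ 0 := ne_of_gt hvol
    nlinarith [h1]
  refine ⟨hlameq, hd, ?_⟩
  -- derive d3 It = -2μ ωsq
  have h2 : -(star4 (d3 ((3 * μ) • It))) = lam • ω := by
    rw [← hstarRt, ← map_smul, ← hd, hflow]
  have hμ3 : (3 * μ) ≠ 0 := by positivity
  have h2' : -((3 * μ) • star4 (d3 It)) = lam • ω := by
    rw [← h2, map_smul, map_smul]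
  have hx : (3 * μ) • star4 (d3 It) = (-lam) • ω := by
    rw [neg_smul]; exact neg_eq_iff_eq_neg.mp h2'
  have h3 : star4 (d3 It) = ((3 * μ)⁻¹ * (-lam)) • ω := by
    rw [mul_smul, ← hx, smul_smul, inv_mul_cancel₀ hμ3, one_smul]
  have h5 : d3 It = ((3 * μ)⁻¹ * (-lam)) • ((1 / 2 : ℝ) • ωsq) := by
    rw [← hstar2, ← map_smul, ← h3, hss]
  rw [h5, smul_smul, hlameq]
  congr 1
  field_simp
  ring
end
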